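/- Let 0<p<∞ and φ∈𝒢_p with φ(1)=1. Assume there exist u>p and c>0 such that φ(t) ≤ c · t^{n/u} for all t>0. Then 𝔈_G ℳ_{φ,p}(ℝ^n)(t) = ∞ for every t>0. -/

import Mathlib

open MeasureTheory Filter Set ENNReal

noncomputable section

abbrev En (n : ℕ) := EuclideanSpace ℝ (Fin n)

/-- The class `𝒢_p`: nondecreasing positive functions on `(0,∞)` such that
`t ↦ φ(t) t^{-n/p}` is nonincreasing. -/
def GClass (n : ℕ) (p : ℝ) (φ : ℝ → ℝ) : Prop :=
  (∀ t : ℝ, 0 < t → 0 < φ t) ∧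
    ∀ t r : ℝ, 0 < t → t ≤ r → φ t ≤ φ r ∧ φ r ≤ φ t * (r / t) ^ ((n : ℝ) / p)

/-- The axis-parallel compact cube centred at `x` with side length `r`. -/
def cube (n : ℕ) (x : En n) (r : ℝ) : Set (En n) := {y | ∀ i, |y i - x i| ≤ r / 2}

/-- The generalised Morrey quasi-norm `‖f | ℳ_{φ,p}(ℝⁿ)‖`. -/
def morreyNorm {F : Type*} [NormedAddCommGroup F] (n : ℕ) (p : ℝ) (φ : ℝ → ℝ)
    (f : En n → F) : ℝ≥0∞ :=
  ⨆ (x : En n) (r : ℝ) (_ : 0 < r),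
    ENNReal.ofReal (φ r) *
      ((volume (cube n x r))⁻¹ *
        ∫⁻ y in cube n x r, ENNReal.ofReal (‖f y‖ ^ p)) ^ (1 / p)

/-- The decreasing rearrangement `f*(t) = inf{σ>0 : |{x : |f(x)|>σ}| ≤ t}`. -/
def rearr {F : Type*} [NormedAddCommGroup F] (n : ℕ) (f : En n → F) (t : ℝ) : ℝ≥0∞ :=
  sInf {σ : ℝ≥0∞ | 0 < σ ∧ volume {x : En n | σ < ENNReal.ofReal ‖f x‖} ≤ ENNReal.ofReal t}

/-- The growth envelope function of the generalised Morrey space `ℳ_{φ,p}(ℝⁿ)`. -/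
def morreyEnvelope (n : ℕ) (p : ℝ) (φ : ℝ → ℝ) (t : ℝ) : ℝ≥0∞ :=
  ⨆ (f : En n → ℝ) (_ : Measurable f) (_ : morreyNorm n p φ f ≤ 1), rearr n f t

end

/-!
Fix `M`. We take `f = L · 1_U`, where `U = Gⁿ` and `G ⊆ ℝ` is a grid of `m` intervals of
length `s` with spacing `d`. Since `φ(s) ≤ c s^{n/u} → 0`, the height `L = 3^{-n/p}/φ(s)` exceeds
`M` for small `s`, and `m` is taken so large that `|U| = (ms)ⁿ > t`, whence `f*(t) ≥ L`. It
remains to choose `d` so that `φ(r) L (|U ∩ Q|/|Q|)^{1/p} ≤ 1` for every cube `Q` of side `r`,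
i.e. `φ(r) L V^{n/p} ≤ r^{n/p}` where `V` bounds the length of `G` in an interval of length `r`.
For `r ≤ s` use `V ≤ r` and monotonicity of `φ`; for `s ≤ r ≤ d` use `V ≤ 3s` and the almost
decrease of `φ(r) r^{-n/p}`; for `r ≥ d` write `V^{n/p} = V^{n/u} V^{n/p-n/u}` with `V ≤ ms`
and `V ≤ 3rs/d`: with `φ(r) ≤ c r^{n/u}` this leaves the factor `(3s/d)^{n/p-n/u}`, which is
small for large `d` because `u > p`.
-/
section Box

variable {n : ℕ}

def box (A : Fin n → Set ℝ) : Set (En n) := {y | ∀ i, y i ∈ A i}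

lemma box_eq_preimage (A : Fin n → Set ℝ) :
    box A = (MeasurableEquiv.toLp 2 (Fin n → ℝ)).symm ⁻¹' univ.pi A := by
  ext y; simp [box]

lemma measurableSet_box {A : Fin n → Set ℝ} (hA : ∀ i, MeasurableSet (A i)) :
    MeasurableSet (box A) := by
  rw [box_eq_preimage]
  exact (MeasurableEquiv.toLp 2 _).symm.measurable (.univ_pi hA)

lemma volume_box {A : Fin n → Set ℝ} (hA : ∀ i, MeasurableSet (A i)) :
    volume (box A) = ∏ i, volume (A i) := by
  rw [box_eq_preimage,
    (EuclideanSpace.volume_preserving_symm_measurableEquiv_toLp (Fin n)).measure_preimage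
      (MeasurableSet.univ_pi hA).nullMeasurableSet, volume_pi_pi]

lemma box_inter_box (A B : Fin n → Set ℝ) : box A ∩ box B = box fun i => A i ∩ B i := by
  ext y; simp [box, forall_and]

lemma cube_eq_box (x : En n) (r : ℝ) :
    cube n x r = box fun i => Icc (x i - r / 2) (x i + r / 2) := by
  ext y; simp only [cube, box, mem_ofPred_eq, mem_Icc, abs_le]
  exact forall_congr' fun i => by constructor <;> rintro ⟨h₁, h₂⟩ <;> constructor <;> linarith

lemma volume_cube (x : En n) {r : ℝ} (hr : 0 ≤ r) :
    volume (cube n x r) = ENNReal.ofReal (r ^ n) := by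
  simp [cube_eq_box, volume_box fun _ => measurableSet_Icc, Real.volume_Icc,
    ENNReal.ofReal_pow hr]

lemma volume_box_inter_cube_le {G : Set ℝ} (hG : MeasurableSet G) {V r : ℝ} (hV0 : 0 ≤ V)
    (hV : ∀ z, volume (G ∩ Icc (z - r / 2) (z + r / 2)) ≤ ENNReal.ofReal V) (x : En n) :
    volume (box (fun _ => G) ∩ cube n x r) ≤ ENNReal.ofReal (V ^ n) := by
  rw [cube_eq_box, box_inter_box, volume_box fun _ => hG.inter measurableSet_Icc,
    ENNReal.ofReal_pow hV0]
  simpa using Finset.prod_le_prod' (s := Finset.univ) fun i _ => hV (x i)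

end Box

section Grid

def gridSet (m : ℕ) (d s : ℝ) : Set ℝ := ⋃ k ∈ Finset.range m, Icc (k * d) (k * d + s)

variable {m : ℕ} {d s : ℝ}

lemma measurableSet_gridSet : MeasurableSet (gridSet m d s) :=
  Finset.measurableSet_biUnion _ fun _ _ => measurableSet_Icc

lemma volume_gridSet (hs : 0 ≤ s) (hsd : s < d) :
    volume (gridSet m d s) = ENNReal.ofReal (m * s) := by
  have hdisj : Pairwise (Function.onFun Disjoint fun k : ℕ => Icc (k * d) (k * d + s)) := by
    refine (pairwise_disjoint_on _).2 fun k l hkl => Set.disjoint_left.2 fun y hk hl => ?_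
    have : (k : ℝ) + 1 ≤ l := by exact_mod_cast hkl
    nlinarith [hk.2, hl.1]
  rw [gridSet, measure_biUnion_finset (hdisj.set_pairwise _) fun _ _ => measurableSet_Icc]
  simp [ENNReal.ofReal_mul]

lemma card_filter_mul_mem_Icc_le (m : ℕ) {A B : ℝ} (hd : 0 < d) (hAB : A ≤ B) :
    (((Finset.range m).filter fun k : ℕ => (k : ℝ) * d ∈ Icc A B).card : ℝ) ≤
      (B - A) / d + 1 := by
  set T := (Finset.range m).filter fun k : ℕ => (k : ℝ) * d ∈ Icc A B
  have hq : 0 ≤ (B - A) / d := div_nonneg (sub_nonneg.2 hAB) hd.le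
  rcases T.eq_empty_or_nonempty with hT | hT
  · simp [hT]; linarith
  obtain ⟨k₀, hk₀, hmin⟩ := T.exists_min_image id hT
  have hsub : T ⊆ Finset.Icc k₀ (k₀ + ⌊(B - A) / d⌋₊) := by
    intro k hk
    have hk₀k : k₀ ≤ k := hmin k hk
    have hdist : ((k - k₀ : ℕ) : ℝ) ≤ (B - A) / d := by
      rw [le_div_iff₀ hd, Nat.cast_sub hk₀k]
      nlinarith [(Finset.mem_filter.1 hk).2.2, (Finset.mem_filter.1 hk₀).2.1]
    have := Nat.le_floor hdist
    exact Finset.mem_Icc.2 ⟨hk₀k, by omega⟩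
  calc (T.card : ℝ) ≤ (Finset.Icc k₀ (k₀ + ⌊(B - A) / d⌋₊)).card := by
        exact_mod_cast Finset.card_le_card hsub
    _ = ⌊(B - A) / d⌋₊ + 1 := by
        rw [Nat.card_Icc, add_assoc, Nat.add_sub_cancel_left, Nat.cast_succ]
    _ ≤ (B - A) / d + 1 := by linarith [Nat.floor_le hq]

lemma volume_Icc_inter_gridSet_le_count {a b : ℝ} (hs : 0 ≤ s) (hd : 0 < d) (hab : a ≤ b) :
    volume (Icc a b ∩ gridSet m d s) ≤ ENNReal.ofReal (((b - a + s) / d + 1) * s) := by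
  set T := (Finset.range m).filter fun k : ℕ => (k : ℝ) * d ∈ Icc (a - s) b
  have hsub : Icc a b ∩ gridSet m d s ⊆ ⋃ k ∈ T, Icc (k * d) (k * d + s) := by
    rintro y ⟨hy, hyG⟩
    simp only [gridSet, mem_iUnion, exists_prop] at hyG ⊢
    obtain ⟨k, hk, hyk⟩ := hyG
    exact ⟨k, Finset.mem_filter.2 ⟨hk, by linarith [hy.1, hyk.2], by linarith [hy.2, hyk.1]⟩,
      hyk⟩
  have hcard : (T.card : ℝ) ≤ (b - a + s) / d + 1 := by
    have := card_filter_mul_mem_Icc_le m hd (by linarith : a - s ≤ b)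
    rwa [sub_sub_eq_add_sub, add_sub_right_comm] at this
  calc volume (Icc a b ∩ gridSet m d s)
      ≤ ∑ k ∈ T, volume (Icc (k * d) (k * d + s)) :=
        (measure_mono hsub).trans (measure_biUnion_finset_le T _)
    _ = ENNReal.ofReal (T.card * s) := by
        simp [ENNReal.ofReal_mul]
    _ ≤ ENNReal.ofReal (((b - a + s) / d + 1) * s) := by
        gcongr

lemma volume_Icc_inter_gridSet_le {a b : ℝ} (hs : 0 ≤ s) (hsd : s < d) (hab : a ≤ b) :
    volume (Icc a b ∩ gridSet m d s) ≤
      ENNReal.ofReal (min (b - a) (min (m * s) (((b - a + s) / d + 1) * s))) := by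
  simp only [ENNReal.ofReal_min, le_min_iff]
  refine ⟨?_, ?_, volume_Icc_inter_gridSet_le_count hs (hs.trans_lt hsd) hab⟩
  · exact (measure_mono inter_subset_left).trans_eq Real.volume_Icc
  · exact (measure_mono inter_subset_right).trans_eq (volume_gridSet hs hsd)

end Grid

section Estimate

open Real

lemma GClass.mul_mul_rpow_le_rpow {n : ℕ} {p β c s d L A r V : ℝ} {φ : ℝ → ℝ}
    (hφ : GClass n p φ) (hφβ : ∀ t, 0 < t → φ t ≤ c * t ^ β) (hβ : 0 ≤ β) (hβα : β < (n : ℝ) / p)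
    (hs : 0 < s) (hsd : s ≤ d) (hL : 0 ≤ L) (hLs : φ s * L * 3 ^ ((n : ℝ) / p) ≤ 1)
    (hLd : c * L * A ^ β * (3 * s / d) ^ ((n : ℝ) / p - β) ≤ 1)
    (hr : 0 < r) (hV : 0 ≤ V) (hVr : V ≤ r) (hVA : V ≤ A) (hVd : V ≤ ((r + s) / d + 1) * s) :
    φ r * L * V ^ ((n : ℝ) / p) ≤ r ^ ((n : ℝ) / p) := by
  set α := (n : ℝ) / p
  have hα : 0 ≤ α := hβ.trans hβα.le
  have hd : 0 < d := hs.trans_le hsd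
  have hφs : 0 ≤ φ s := (hφ.1 s hs).le
  have hA : 0 ≤ A := hV.trans hVA
  have hφsL : φ s * L ≤ 1 :=
    le_trans (le_mul_of_one_le_right (mul_nonneg hφs hL) (one_le_rpow (by norm_num) hα)) hLs
  rcases le_total r s with hrs | hsr
  · calc φ r * L * V ^ α ≤ φ s * L * r ^ α := by
          gcongr
          exact (hφ.2 r s hr hrs).1
      _ ≤ r ^ α := mul_le_of_le_one_left (by positivity) hφsL
  rcases le_total r d with hrd | hdr
  · have hV3 : V ≤ 3 * s := by
      refine hVd.trans (mul_le_mul_of_nonneg_right ?_ hs.le)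
      linarith [(div_le_iff₀ hd).2 (by linarith : r + s ≤ 2 * d)]
    calc φ r * L * V ^ α ≤ φ s * (r / s) ^ α * L * (3 * s) ^ α := by
          gcongr
          exact (hφ.2 s r hs hsr).2
      _ = φ s * L * 3 ^ α * r ^ α := by
          rw [div_rpow hr.le hs.le, mul_rpow (by norm_num) hs.le]
          field_simp
      _ ≤ r ^ α := mul_le_of_le_one_left (by positivity) hLs
  · have hV3 : V ≤ r * (3 * s / d) := by
      refine hVd.trans ?_
      rw [div_add_one hd.ne', div_mul_eq_mul_div, mul_div_assoc',
        div_le_div_iff_of_pos_right hd]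
      nlinarith
    calc φ r * L * V ^ α = φ r * L * (V ^ β * V ^ (α - β)) := by
          rw [← rpow_add' hV (by linarith), add_sub_cancel]
      _ ≤ c * r ^ β * L * (A ^ β * (r * (3 * s / d)) ^ (α - β)) := by
          gcongr
          · exact mul_nonneg ((hφ.1 r hr).le.trans (hφβ r hr)) hL
          · exact hφβ r hr
      _ = c * L * A ^ β * (3 * s / d) ^ (α - β) * r ^ α := by
          rw [mul_rpow hr.le (by positivity), ← add_sub_cancel β α, rpow_add hr,
            add_sub_cancel_left]
          ring
      _ ≤ r ^ α := mul_le_of_le_one_left (by positivity) hLd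

end Estimate

section Indicator

variable {n : ℕ} {U : Set (En n)} {L : ℝ}

lemma setLIntegral_indicator_const_rpow {p : ℝ} (hp : 0 < p) (hL : 0 ≤ L)
    (hU : MeasurableSet U) (Q : Set (En n)) :
    ∫⁻ y in Q, ENNReal.ofReal (‖U.indicator (fun _ => L) y‖ ^ p) =
      ENNReal.ofReal (L ^ p) * volume (U ∩ Q) := by
  have hfun : (fun y => ENNReal.ofReal (‖U.indicator (fun _ => L) y‖ ^ p)) =
      U.indicator fun _ => ENNReal.ofReal (L ^ p) := by
    ext y
    by_cases hy : y ∈ U <;> simp [hy, abs_of_nonneg hL, Real.zero_rpow hp.ne']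
  rw [hfun, lintegral_indicator hU, setLIntegral_const, Measure.restrict_apply hU]

lemma morreyNorm_indicator_le_one {p : ℝ} {φ : ℝ → ℝ} (hp : 0 < p) (hL : 0 ≤ L)
    (hU : MeasurableSet U) (hφ : ∀ r, 0 < r → 0 ≤ φ r)
    (hcube : ∀ x r, 0 < r → ∃ V, 0 ≤ V ∧ volume (U ∩ cube n x r) ≤ ENNReal.ofReal (V ^ n) ∧
      φ r * L * V ^ ((n : ℝ) / p) ≤ r ^ ((n : ℝ) / p)) :
    morreyNorm n p φ (U.indicator fun _ => L) ≤ 1 := by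
  refine iSup_le fun x => iSup_le fun r => iSup_le fun hr => ?_
  obtain ⟨V, hV, hUV, hφV⟩ := hcube x r hr
  have hreal : φ r * ((r ^ n)⁻¹ * (L ^ p * V ^ n)) ^ (1 / p) =
      φ r * L * V ^ ((n : ℝ) / p) / r ^ ((n : ℝ) / p) := by
    rw [← Real.rpow_natCast, ← Real.rpow_natCast, Real.mul_rpow (by positivity) (by positivity),
      Real.mul_rpow (by positivity) (by positivity), Real.inv_rpow (by positivity),
      ← Real.rpow_mul hr.le, ← Real.rpow_mul hL, ← Real.rpow_mul hV,
      mul_one_div_cancel hp.ne', Real.rpow_one, mul_one_div]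
    ring
  calc ENNReal.ofReal (φ r) * ((volume (cube n x r))⁻¹ *
        ∫⁻ y in cube n x r, ENNReal.ofReal (‖U.indicator (fun _ => L) y‖ ^ p)) ^ (1 / p)
      ≤ ENNReal.ofReal (φ r) * ((ENNReal.ofReal (r ^ n))⁻¹ *
          (ENNReal.ofReal (L ^ p) * ENNReal.ofReal (V ^ n))) ^ (1 / p) := by
        rw [setLIntegral_indicator_const_rpow hp hL hU, volume_cube x hr.le]
        gcongr
    _ = ENNReal.ofReal (φ r * ((r ^ n)⁻¹ * (L ^ p * V ^ n)) ^ (1 / p)) := by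
        rw [← ENNReal.ofReal_inv_of_pos (by positivity), ← ENNReal.ofReal_mul (by positivity),
          ← ENNReal.ofReal_mul (by positivity),
          ENNReal.ofReal_rpow_of_nonneg (by positivity) (by positivity),
          ← ENNReal.ofReal_mul (hφ r hr)]
    _ ≤ 1 := by
        rw [ENNReal.ofReal_le_one, hreal]
        exact div_le_one_of_le₀ hφV (by positivity)

lemma ofReal_le_rearr {F : Type*} [NormedAddCommGroup F] {f : En n → F} {t : ℝ}
    (hf : ∀ x ∈ U, L ≤ ‖f x‖) (hU : ENNReal.ofReal t < volume U) :
    ENNReal.ofReal L ≤ rearr n f t := by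
  refine le_sInf fun σ ⟨_, hσ⟩ => not_lt.1 fun hσL => ?_
  have hsub : U ⊆ {x | σ < ENNReal.ofReal ‖f x‖} := fun x hx =>
    hσL.trans_le (ENNReal.ofReal_le_ofReal (hf x hx))
  exact (measure_mono hsub |>.trans hσ).not_gt hU

lemma rearr_le_morreyEnvelope {p : ℝ} {φ : ℝ → ℝ} {f : En n → ℝ} (hf : Measurable f)
    (hnorm : morreyNorm n p φ f ≤ 1) (t : ℝ) : rearr n f t ≤ morreyEnvelope n p φ t :=
  le_iSup₂_of_le f hf (le_iSup_of_le hnorm le_rfl)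

end Indicator

section GridBox

def gridBox (n m : ℕ) (d s : ℝ) : Set (En n) := box fun _ => gridSet m d s

variable {n m : ℕ} {d s : ℝ}

lemma measurableSet_gridBox : MeasurableSet (gridBox n m d s) :=
  measurableSet_box fun _ => measurableSet_gridSet

lemma volume_gridBox (hs : 0 ≤ s) (hsd : s < d) :
    volume (gridBox n m d s) = ENNReal.ofReal ((m * s) ^ n) := by
  simp [gridBox, volume_box fun _ => measurableSet_gridSet, volume_gridSet hs hsd,
    ENNReal.ofReal_pow (mul_nonneg m.cast_nonneg hs)]

lemma ofReal_lt_volume_gridBox {t : ℝ} (hn : n ≠ 0) (hs : 0 ≤ s) (hsd : s < d)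
    (hm : max 1 t < m * s) : ENNReal.ofReal t < volume (gridBox n m d s) := by
  have hms : 1 ≤ (m : ℝ) * s := (le_max_left _ _).trans hm.le
  rw [volume_gridBox hs hsd, ENNReal.ofReal_lt_ofReal_iff']
  exact ⟨(le_max_right _ _).trans_lt (hm.trans_le (le_self_pow₀ hms hn)), by positivity⟩

lemma morreyNorm_gridBox_indicator_le_one {p β c L : ℝ} {φ : ℝ → ℝ} (hφ : GClass n p φ)
    (hp : 0 < p) (hφβ : ∀ t, 0 < t → φ t ≤ c * t ^ β) (hβ : 0 ≤ β) (hβα : β < (n : ℝ) / p)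
    (hs : 0 < s) (hsd : s < d) (hL : 0 ≤ L) (hLs : φ s * L * 3 ^ ((n : ℝ) / p) ≤ 1)
    (hLd : c * L * (m * s) ^ β * (3 * s / d) ^ ((n : ℝ) / p - β) ≤ 1) :
    morreyNorm n p φ ((gridBox n m d s).indicator fun _ => L) ≤ 1 := by
  refine morreyNorm_indicator_le_one hp hL measurableSet_gridBox (fun r hr => (hφ.1 r hr).le)
    fun x r hr => ?_
  set V := min r (min (m * s) (((r + s) / d + 1) * s))
  have hd : 0 < d := hs.trans hsd
  have hV : 0 ≤ V := le_min hr.le (le_min (by positivity) (by positivity))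
  refine ⟨V, hV, volume_box_inter_cube_le measurableSet_gridSet hV (fun z => ?_) x,
    hφ.mul_mul_rpow_le_rpow hφβ hβ hβα hs hsd.le hL hLs hLd hr hV (min_le_left _ _)
      ((min_le_right _ _).trans (min_le_left _ _)) ((min_le_right _ _).trans (min_le_right _ _))⟩
  have := volume_Icc_inter_gridSet_le (m := m) hs.le hsd (by linarith : z - r / 2 ≤ z + r / 2)
  rwa [inter_comm, add_sub_sub_cancel, add_halves] at this

end GridBox

lemma eventually_mul_rpow_lt_one {l : Filter ℝ} {g : ℝ → ℝ} (hg : Tendsto g l (nhds 0))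
    (K : ℝ) {γ : ℝ} (hγ : 0 < γ) : ∀ᶠ x in l, K * g x ^ γ < 1 := by
  have := (((Real.continuous_rpow_const hγ.le).tendsto 0).comp hg).const_mul K
  rw [Function.comp_def, Real.zero_rpow hγ.ne', mul_zero] at this
  exact this.eventually (gt_mem_nhds one_pos)

lemma exists_pos_mul_le_one_of_le_rpow {φ : ℝ → ℝ} {c β K : ℝ} (hβ : 0 < β)
    (hφβ : ∀ t, 0 < t → φ t ≤ c * t ^ β) (hK : 0 ≤ K) : ∃ s, 0 < s ∧ K * φ s ≤ 1 := by
  obtain ⟨s, hsK, hs⟩ := ((eventually_mul_rpow_lt_one (l := nhdsWithin 0 (Ioi 0))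
    (tendsto_id.mono_left nhdsWithin_le_nhds) (K * c) hβ).and self_mem_nhdsWithin).exists
  refine ⟨s, hs, ?_⟩
  calc K * φ s ≤ K * (c * s ^ β) := by gcongr; exact hφβ s hs
    _ ≤ 1 := by rw [← mul_assoc]; exact hsK.le

theorem statement2_general (n : ℕ) (hn : 0 < n) (p : ℝ) (hp : 0 < p) (φ : ℝ → ℝ)
    (hφ : GClass n p φ)
    (hu : ∃ u c : ℝ, p < u ∧ 0 < c ∧ ∀ t : ℝ, 0 < t → φ t ≤ c * t ^ ((n : ℝ) / u)) :
    ∀ t : ℝ, 0 < t → morreyEnvelope n p φ t = ⊤ := by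
  intro t _
  obtain ⟨u, c, hpu, -, hφu⟩ := hu
  have hβ : 0 < (n : ℝ) / u := div_pos (by exact_mod_cast hn) (hp.trans hpu)
  have hβα : (n : ℝ) / u < n / p := div_lt_div_of_pos_left (by exact_mod_cast hn) hp hpu
  refine ENNReal.eq_top_of_forall_nnreal_le fun M => ?_
  obtain ⟨s, hs, hsM⟩ := exists_pos_mul_le_one_of_le_rpow hβ hφu
    (by positivity : (0 : ℝ) ≤ M * 3 ^ ((n : ℝ) / p))
  set L := 1 / (φ s * 3 ^ ((n : ℝ) / p))
  have hφs := hφ.1 s hs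
  have hML : (M : ℝ) ≤ L := by rw [le_div_iff₀ (by positivity)]; linarith
  obtain ⟨m, hm⟩ := exists_nat_gt (max 1 t / s)
  obtain ⟨d, hd, hsd⟩ := ((eventually_mul_rpow_lt_one
    (tendsto_const_nhds.div_atTop tendsto_id) (c * L * (m * s) ^ ((n : ℝ) / u))
    (sub_pos.2 hβα)).and (eventually_gt_atTop s)).exists
  have hnorm := morreyNorm_gridBox_indicator_le_one (m := m) hφ hp hφu hβ.le hβα hs hsd
    (by positivity) (by rw [mul_right_comm, mul_one_div_cancel (by positivity)]) hd.le
  calc (M : ℝ≥0∞) ≤ ENNReal.ofReal L := by simpa using ENNReal.ofReal_le_ofReal hML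
    _ ≤ rearr n ((gridBox n m d s).indicator fun _ => L) t :=
        ofReal_le_rearr (fun x hx => by simp [hx, abs_of_nonneg (by positivity : 0 ≤ L)])
          (ofReal_lt_volume_gridBox hn.ne' hs.le hsd ((div_lt_iff₀ hs).1 hm))
    _ ≤ morreyEnvelope n p φ t :=
        rearr_le_morreyEnvelope (measurable_const.indicator measurableSet_gridBox) hnorm t

/-- If there are `u>p` and `c>0` with `φ(t) ≤ c t^{n/u}` for all `t>0`, then
the growth envelope function of `ℳ_{φ,p}(ℝⁿ)` is identically `∞` on `(0,∞)`. -/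
theorem statement2 (n : ℕ) (hn : 0 < n) (p : ℝ) (hp : 0 < p) (φ : ℝ → ℝ)
    (hφ : GClass n p φ) (hφ1 : φ 1 = 1)
    (hu : ∃ u c : ℝ, p < u ∧ 0 < c ∧ ∀ t : ℝ, 0 < t → φ t ≤ c * t ^ ((n : ℝ) / u)) :
    ∀ t : ℝ, 0 < t → morreyEnvelope n p φ t = ⊤ :=
  statement2_general n hn p hp φ hφ hu
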